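/- Two-sequence model: fix indicators $I_{kj}\in\{0,1\}$ for $k=1,2$ and $j=1,2,\ldots$, and for each $j$ let $P_{1j},P_{2j}$ be $[0,1]$-valued random variables, all mutually independent across $j$ and $k$, such that $P_{kj}$ is Uniform$[0,1]$ if $I_{kj}=0$ and $P_{kj}$ has a continuous CDF $F^1_{kj}$ with $F^1_{kj}(t)\ge t$ for all $t\in[0,1]$ if $I_{kj}=1$. Let $\hat\sigma_{12}=(p-1)^{-1}\sum_{j\le p}P_{1j}P_{2j}-(p-1)^{-2}\sum_{j\le p}P_{1j}\sum_{j\le p}P_{2j}$. Then under Assumption 1, almost surely $\hat\sigma_{12}\to(\pi_{11}-\pi_1\pi_2)\left(\tfrac12-\mu^1_1\right)\left(\tfrac12-\mu^1_2\right)+\pi_{11}(\sigma^1_{12}-\mu^1_1\mu^1_2)$ as $p\to\infty$, where $\mu^1_k=\int_0^1 t\,dF^1_k(t)$ and $\sigma^1_{12}=\int_{[0,1]^2}t_1t_2\,dG^1(t_1,t_2)$. -/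

import Mathlib

open MeasureTheory ProbabilityTheory Filter Set

noncomputable section

/-- Features among the first `p` with signal pattern `(a, b)`. -/
def Aab (I1 I2 : ℕ → Bool) (a b : Bool) (p : ℕ) : Finset ℕ :=
  (Finset.range p).filter fun j => I1 j = a ∧ I2 j = b

/-- Univariate empirical distribution function of the first `p` variables. -/
def empF {Ω : Type*} (P : ℕ → Ω → ℝ) (p : ℕ) (t : ℝ) (ω : Ω) : ℝ :=
  (p : ℝ)⁻¹ * ∑ j ∈ Finset.range p, if P j ω ≤ t then 1 else 0

/-- Bivariate empirical distribution function of the first `p` pairs. -/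
def empG {Ω : Type*} (P1 P2 : ℕ → Ω → ℝ) (p : ℕ) (t1 t2 : ℝ) (ω : Ω) : ℝ :=
  (p : ℝ)⁻¹ * ∑ j ∈ Finset.range p, if P1 j ω ≤ t1 ∧ P2 j ω ≤ t2 then 1 else 0

/-- The conservative estimator `FDR-hat^U` of the false discovery rate: the ratio
`F̂₁(t₁)F̂₂(t₂)/Ĝ(t₁,t₂)` when `Ĝ(t₁,t₂) > 0` and `0` otherwise. -/
def fdrHat {Ω : Type*} (P1 P2 : ℕ → Ω → ℝ) (p : ℕ) (t1 t2 : ℝ) (ω : Ω) : ℝ :=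
  if 0 < empG P1 P2 p t1 t2 ω then
    empF P1 p t1 ω * empF P2 p t2 ω / empG P1 P2 p t1 t2 ω
  else 0

/-- The count `V_{ab}(t₁,t₂)` of rejections among features with signal pattern `(a,b)`. -/
def Vab {Ω : Type*} (I1 I2 : ℕ → Bool) (P1 P2 : ℕ → Ω → ℝ) (a b : Bool) (p : ℕ)
    (t1 t2 : ℝ) (ω : Ω) : ℝ :=
  ∑ j ∈ Aab I1 I2 a b p, if P1 j ω ≤ t1 ∧ P2 j ω ≤ t2 then 1 else 0

/-- The total count `R(t₁,t₂)` of rejections. -/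
def Rcount {Ω : Type*} (P1 P2 : ℕ → Ω → ℝ) (p : ℕ) (t1 t2 : ℝ) (ω : Ω) : ℝ :=
  ∑ j ∈ Finset.range p, if P1 j ω ≤ t1 ∧ P2 j ω ≤ t2 then 1 else 0

/-- The false discovery proportion `(V₀₀ + V₁₀ + V₀₁)/max{1, R}`. -/
def FDP {Ω : Type*} (I1 I2 : ℕ → Bool) (P1 P2 : ℕ → Ω → ℝ) (p : ℕ) (t1 t2 : ℝ) (ω : Ω) : ℝ :=
  (Vab I1 I2 P1 P2 false false p t1 t2 ω + Vab I1 I2 P1 P2 true false p t1 t2 ω +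
      Vab I1 I2 P1 P2 false true p t1 t2 ω) /
    max 1 (Rcount P1 P2 p t1 t2 ω)

/-- The true false discovery rate attained by the rejection region `[0,t₁] × [0,t₂]`. -/
def FDR {Ω : Type*} [MeasurableSpace Ω] (μ : Measure Ω) (I1 I2 : ℕ → Bool)
    (P1 P2 : ℕ → Ω → ℝ) (p : ℕ) (t1 t2 : ℝ) : ℝ :=
  ∫ ω, FDP I1 I2 P1 P2 p t1 t2 ω ∂μ

/-- The empirical covariance `σ̂₁₂` of the two sequences of p-values. -/
def sigmaHat {Ω : Type*} (P1 P2 : ℕ → Ω → ℝ) (p : ℕ) (ω : Ω) : ℝ :=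
  ((p : ℝ) - 1)⁻¹ * ∑ j ∈ Finset.range p, P1 j ω * P2 j ω -
    (((p : ℝ) - 1)⁻¹) ^ 2 * (∑ j ∈ Finset.range p, P1 j ω) * (∑ j ∈ Finset.range p, P2 j ω)


section AuxSection
namespace CovAux
variable {Ω : Type*} [MeasurableSpace Ω] {μ : Measure Ω} [IsProbabilityMeasure μ]

lemma ind_int {x : ℝ} (hx : x ∈ Icc (0:ℝ) 1) :
    ∫ t in Ioc (0:ℝ) 1, (if t < x then (1:ℝ) else 0) = x := by
  have h1 : (fun t => if t < x then (1:ℝ) else 0) = (Iio x).indicator (fun _ => (1:ℝ)) := by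
    ext t; simp [Set.indicator_apply, Set.mem_Iio]
  rw [h1, setIntegral_indicator measurableSet_Iio]
  have h2 : Ioc (0:ℝ) 1 ∩ Iio x = Ioo 0 x := by
    ext t
    simp only [mem_inter_iff, mem_Ioc, mem_Iio, mem_Ioo]
    constructor
    · rintro ⟨⟨h1, _⟩, h3⟩; exact ⟨h1, h3⟩
    · rintro ⟨h1, h2⟩; exact ⟨⟨h1, le_trans h2.le hx.2⟩, h2⟩
  rw [h2]
  simp [Real.volume_Ioo, ENNReal.toReal_ofReal hx.1, hx.1]

lemma meas_lt_toReal {X : Ω → ℝ} (hm : Measurable X) (t : ℝ) :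
    (μ {ω | t < X ω}).toReal = 1 - (μ {ω | X ω ≤ t}).toReal := by
  have hc : {ω | t < X ω} = {ω | X ω ≤ t}ᶜ := by ext ω; simp [not_le]
  rw [hc, measure_compl (measurableSet_le hm measurable_const) (measure_ne_top _ _),
    measure_univ, ENNReal.toReal_sub_of_le prob_le_one (by simp)]
  simp

lemma exp_ind {X : Ω → ℝ} (hm : Measurable X) (t : ℝ) :
    ∫ ω, (if t < X ω then (1:ℝ) else 0) ∂μ = 1 - (μ {ω | X ω ≤ t}).toReal := by
  have h1 : (fun ω => if t < X ω then (1:ℝ) else 0)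
      = {ω | t < X ω}.indicator (fun _ => (1:ℝ)) := by
    ext ω; simp [Set.indicator_apply, Set.mem_setOf_eq]
  rw [h1, integral_indicator_const (1:ℝ) (measurableSet_lt measurable_const hm)]
  simp [measureReal_def, meas_lt_toReal hm]

lemma exp_eq_cdf {X : Ω → ℝ} (hm : Measurable X) (hr : ∀ᵐ ω ∂μ, X ω ∈ Icc (0:ℝ) 1) :
    ∫ ω, X ω ∂μ = ∫ t in Ioc (0:ℝ) 1, (1 - (μ {ω | X ω ≤ t}).toReal) := by
  have hset : MeasurableSet {q : Ω × ℝ | q.2 < X q.1} :=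
    measurableSet_lt measurable_snd (hm.comp measurable_fst)
  have h1 : ∀ᵐ ω ∂μ, X ω = ∫ t in Ioc (0:ℝ) 1, (if t < X ω then (1:ℝ) else 0) := by
    filter_upwards [hr] with ω hω
    exact (ind_int hω).symm
  have hint : Integrable (Function.uncurry fun ω t => if t < X ω then (1:ℝ) else 0)
      (μ.prod (volume.restrict (Ioc (0:ℝ) 1))) := by
    refine (integrable_const (1:ℝ)).mono' ?_ ?_
    · exact (Measurable.ite hset measurable_const measurable_const).aestronglyMeasurable
    · filter_upwards with q
      by_cases h : q.2 < X q.1 <;> simp [Function.uncurry, h]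
  calc ∫ ω, X ω ∂μ
      = ∫ ω, (∫ t in Ioc (0:ℝ) 1, (if t < X ω then (1:ℝ) else 0)) ∂μ := integral_congr_ae h1
    _ = ∫ t in Ioc (0:ℝ) 1, ∫ ω, (if t < X ω then (1:ℝ) else 0) ∂μ :=
        integral_integral_swap hint
    _ = ∫ t in Ioc (0:ℝ) 1, (1 - (μ {ω | X ω ≤ t}).toReal) := by
        refine setIntegral_congr_fun measurableSet_Ioc fun t _ => ?_
        exact exp_ind hm t


lemma exp2_eq_cdf {X Y : Ω → ℝ} (hmX : Measurable X) (hmY : Measurable Y)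
    (hrX : ∀ᵐ ω ∂μ, X ω ∈ Icc (0:ℝ) 1) (hrY : ∀ᵐ ω ∂μ, Y ω ∈ Icc (0:ℝ) 1) :
    ∫ ω, X ω * Y ω ∂μ = ∫ t in Ioc (0:ℝ) 1 ×ˢ Ioc (0:ℝ) 1,
      (μ {ω | t.1 < X ω ∧ t.2 < Y ω}).toReal := by
  set ν : Measure (ℝ × ℝ) :=
    (volume.restrict (Ioc (0:ℝ) 1)).prod (volume.restrict (Ioc (0:ℝ) 1)) with hν
  have hνeq : ν = (volume : Measure (ℝ × ℝ)).restrict (Ioc (0:ℝ) 1 ×ˢ Ioc (0:ℝ) 1) := by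
    rw [hν, Measure.prod_restrict, ← Measure.volume_eq_prod]
  have h1 : ∀ᵐ ω ∂μ, X ω * Y ω
      = ∫ t, (if t.1 < X ω then (1:ℝ) else 0) * (if t.2 < Y ω then (1:ℝ) else 0) ∂ν := by
    filter_upwards [hrX, hrY] with ω h1 h2
    rw [hν]
    rw [integral_prod_mul (f := fun a : ℝ => if a < X ω then (1:ℝ) else 0)
      (g := fun a : ℝ => if a < Y ω then (1:ℝ) else 0), ind_int h1, ind_int h2]
  have hmq1 : Measurable fun q : Ω × (ℝ × ℝ) => if q.2.1 < X q.1 then (1:ℝ) else 0 :=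
    Measurable.ite (measurableSet_lt (measurable_fst.comp measurable_snd)
      (hmX.comp measurable_fst)) measurable_const measurable_const
  have hmq2 : Measurable fun q : Ω × (ℝ × ℝ) => if q.2.2 < Y q.1 then (1:ℝ) else 0 :=
    Measurable.ite (measurableSet_lt (measurable_snd.comp measurable_snd)
      (hmY.comp measurable_fst)) measurable_const measurable_const
  have hint : Integrable (Function.uncurry fun ω (t : ℝ × ℝ) =>
      (if t.1 < X ω then (1:ℝ) else 0) * (if t.2 < Y ω then (1:ℝ) else 0)) (μ.prod ν) := by
    refine (integrable_const (1:ℝ)).mono' ?_ ?_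
    · exact (hmq1.mul hmq2).aestronglyMeasurable
    · filter_upwards with q
      by_cases h1 : q.2.1 < X q.1 <;> by_cases h2 : q.2.2 < Y q.1 <;>
        simp [Function.uncurry, h1, h2]
  calc ∫ ω, X ω * Y ω ∂μ
      = ∫ ω, (∫ t, (if t.1 < X ω then (1:ℝ) else 0) * (if t.2 < Y ω then (1:ℝ) else 0) ∂ν) ∂μ :=
        integral_congr_ae h1
    _ = ∫ t, (∫ ω, (if t.1 < X ω then (1:ℝ) else 0) * (if t.2 < Y ω then (1:ℝ) else 0) ∂μ) ∂ν :=
        integral_integral_swap hint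
    _ = ∫ t, (μ {ω | t.1 < X ω ∧ t.2 < Y ω}).toReal ∂ν := by
        refine integral_congr_ae (ae_of_all _ fun t => ?_)
        show ∫ ω, (if t.1 < X ω then (1:ℝ) else 0) * (if t.2 < Y ω then (1:ℝ) else 0) ∂μ
          = (μ {ω | t.1 < X ω ∧ t.2 < Y ω}).toReal
        have heq : (fun ω => (if t.1 < X ω then (1:ℝ) else 0) * (if t.2 < Y ω then (1:ℝ) else 0))
            = fun ω => if t.1 < X ω ∧ t.2 < Y ω then (1:ℝ) else 0 := by
          ext ω; by_cases h1 : t.1 < X ω <;> by_cases h2 : t.2 < Y ω <;> simp [h1, h2]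
        have hms : MeasurableSet {ω | t.1 < X ω ∧ t.2 < Y ω} := by
          rw [Set.setOf_and]
          exact (measurableSet_lt measurable_const hmX).inter
            (measurableSet_lt measurable_const hmY)
        have h2 : (fun ω => if t.1 < X ω ∧ t.2 < Y ω then (1:ℝ) else 0)
            = {ω | t.1 < X ω ∧ t.2 < Y ω}.indicator (fun _ => (1:ℝ)) := by
          ext ω; simp [Set.indicator_apply, Set.mem_setOf_eq]
        rw [heq, h2, integral_indicator_const (1:ℝ) hms]; simp [measureReal_def]
    _ = _ := by rw [hνeq]


lemma integrable_bdd {X : Ω → ℝ} (hm : AEStronglyMeasurable X μ) (h : ∀ ω, |X ω| ≤ 1) :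
    Integrable X μ :=
  (integrable_const 1).mono' hm (ae_of_all _ fun ω => by simpa using h ω)

lemma slln {X : ℕ → Ω → ℝ} (hm : ∀ j, Measurable (X j)) (hb : ∀ j ω, X j ω ∈ Icc (0:ℝ) 1)
    (hind : ∀ i j, i ≠ j → IndepFun (X i) (X j) μ) :
    ∀ᵐ ω ∂μ, Tendsto (fun p : ℕ => (p:ℝ)⁻¹ * ∑ j ∈ Finset.range p, (X j ω - ∫ a, X j a ∂μ))
      atTop (nhds 0) := by
  set E : ℕ → ℝ := fun j => ∫ a, X j a ∂μ with hE
  set Y : ℕ → Ω → ℝ := fun j ω => X j ω - E j with hYdef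
  have hmY : ∀ j, Measurable (Y j) := fun j => (hm j).sub measurable_const
  have hintX : ∀ j, Integrable (X j) μ := fun j => integrable_bdd (hm j).aestronglyMeasurable
    (fun ω => abs_le.2 ⟨by linarith [(hb j ω).1], by linarith [(hb j ω).2]⟩)
  have hEb : ∀ j, E j ∈ Icc (0:ℝ) 1 := by
    intro j
    constructor
    · exact integral_nonneg fun ω => (hb j ω).1
    · calc ∫ a, X j a ∂μ ≤ ∫ _a, (1:ℝ) ∂μ :=
            integral_mono (hintX j) (integrable_const 1) fun ω => (hb j ω).2
        _ = 1 := by simp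
  have hYb : ∀ j ω, |Y j ω| ≤ 1 := fun j ω => abs_le.2
    ⟨by simp only [hYdef]; linarith [(hb j ω).2, (hEb j).2, (hb j ω).1, (hEb j).1],
     by simp only [hYdef]; linarith [(hb j ω).2, (hEb j).2, (hb j ω).1, (hEb j).1]⟩
  have hintY : ∀ j, Integrable (Y j) μ := fun j => (hintX j).sub (integrable_const _)
  have hEY : ∀ j, ∫ a, Y j a ∂μ = 0 := by
    intro j
    simp only [hYdef]
    rw [integral_sub (hintX j) (integrable_const _), integral_const]
    simp [hE]
  have hintYY : ∀ i j, Integrable (fun ω => Y i ω * Y j ω) μ := fun i j =>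
    integrable_bdd ((hmY i).mul (hmY j)).aestronglyMeasurable (fun ω => by
      calc |Y i ω * Y j ω| = |Y i ω| * |Y j ω| := abs_mul _ _
        _ ≤ 1 * 1 := mul_le_mul (hYb i ω) (hYb j ω) (abs_nonneg _) zero_le_one
        _ = 1 := one_mul 1)
  have hcross : ∀ i j, i ≠ j → ∫ ω, Y i ω * Y j ω ∂μ = 0 := by
    intro i j hij
    have hI : IndepFun (Y i) (Y j) μ :=
      (hind i j hij).comp (φ := fun x => x - E i) (ψ := fun x => x - E j)
        (measurable_id.sub measurable_const) (measurable_id.sub measurable_const)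
    have h2 := hI.integral_fun_mul_eq_mul_integral (hintY i).aestronglyMeasurable (hintY j).aestronglyMeasurable
    calc ∫ ω, Y i ω * Y j ω ∂μ = (∫ ω, Y i ω ∂μ) * ∫ ω, Y j ω ∂μ := h2
      _ = 0 := by rw [hEY i, hEY j]; ring
  set S : ℕ → Ω → ℝ := fun n ω => ∑ j ∈ Finset.range n, Y j ω with hSdef
  have hmS : ∀ n, Measurable (S n) := fun n => by
    simp only [hSdef]; exact Finset.measurable_sum _ fun j _ => hmY j
  have hSb : ∀ n ω, |S n ω| ≤ n := by
    intro n ω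
    calc |S n ω| ≤ ∑ j ∈ Finset.range n, |Y j ω| := Finset.abs_sum_le_sum_abs _ _
      _ ≤ ∑ _j ∈ Finset.range n, (1:ℝ) := Finset.sum_le_sum fun j _ => hYb j ω
      _ = n := by simp
  have hvar : ∀ n, ∫ ω, (S n ω)^2 ∂μ ≤ n := by
    intro n
    have expand : ∀ ω, (S n ω)^2
        = ∑ i ∈ Finset.range n, ∑ j ∈ Finset.range n, Y i ω * Y j ω := by
      intro ω; simp only [hSdef]; rw [sq, Finset.sum_mul_sum]
    have hswap : ∫ ω, (S n ω)^2 ∂μ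
        = ∑ i ∈ Finset.range n, ∑ j ∈ Finset.range n, ∫ ω, Y i ω * Y j ω ∂μ := by
      simp_rw [expand]
      rw [integral_finset_sum _ fun i _ => integrable_finset_sum _ fun j _ => hintYY i j]
      exact Finset.sum_congr rfl fun i _ => integral_finset_sum _ fun j _ => hintYY i j
    rw [hswap]
    have hdiag : ∀ i ∈ Finset.range n,
        ∑ j ∈ Finset.range n, ∫ ω, Y i ω * Y j ω ∂μ ≤ 1 := by
      intro i hi
      rw [Finset.sum_eq_single i (fun j _ hji => hcross i j (Ne.symm hji))
        (fun h => absurd hi h)]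
      calc ∫ ω, Y i ω * Y i ω ∂μ
          ≤ ∫ _ω, (1:ℝ) ∂μ := integral_mono (hintYY i i) (integrable_const _)
            (fun ω => by nlinarith [hYb i ω, abs_nonneg (Y i ω), sq_abs (Y i ω)])
        _ = 1 := by simp
    calc ∑ i ∈ Finset.range n, ∑ j ∈ Finset.range n, ∫ ω, Y i ω * Y j ω ∂μ
        ≤ ∑ _i ∈ Finset.range n, (1:ℝ) := Finset.sum_le_sum hdiag
      _ = n := by simp
  set Z : ℕ → Ω → ℝ := fun n ω => (((n:ℝ))^2)⁻¹ * S (n^2) ω with hZdef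
  have hmZ : ∀ n, Measurable (Z n) := fun n => (hmS _).const_mul _
  have hZb : ∀ n ω, |Z n ω| ≤ 1 := by
    intro n ω
    rcases Nat.eq_zero_or_pos n with h|h
    · simp [hZdef, h]
    · have h1 : |S (n^2) ω| ≤ ((n:ℝ))^2 := by
        have := hSb (n^2) ω
        rwa [Nat.cast_pow] at this
      have h2 : (0:ℝ) < ((n:ℝ))^2 := by positivity
      simp only [hZdef]
      rw [abs_mul, abs_inv, abs_of_nonneg (le_of_lt h2)]
      calc (((n:ℝ))^2)⁻¹ * |S (n^2) ω| ≤ (((n:ℝ))^2)⁻¹ * ((n:ℝ))^2 :=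
            mul_le_mul_of_nonneg_left h1 (by positivity)
        _ = 1 := inv_mul_cancel₀ (ne_of_gt h2)
  have hintZ2 : ∀ n, Integrable (fun ω => (Z n ω)^2) μ := fun n =>
    integrable_bdd ((hmZ n).pow_const 2).aestronglyMeasurable
      (fun ω => by rw [abs_pow]; nlinarith [hZb n ω, abs_nonneg (Z n ω)])
  have hZvar : ∀ n, ∫ ω, (Z n ω)^2 ∂μ ≤ (((n:ℝ))^2)⁻¹ := by
    intro n
    rcases Nat.eq_zero_or_pos n with h|h
    · subst h
      simp [hZdef]
    · have h2 : (0:ℝ) < ((n:ℝ))^2 := by positivity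
      have heq : ∀ ω, (Z n ω)^2 = ((((n:ℝ))^2)⁻¹)^2 * (S (n^2) ω)^2 := by
        intro ω; simp only [hZdef]; ring
      simp_rw [heq]
      rw [integral_const_mul]
      have h3 : ∫ ω, (S (n^2) ω)^2 ∂μ ≤ ((n:ℝ))^2 := by
        have := hvar (n^2)
        rwa [Nat.cast_pow] at this
      calc ((((n:ℝ))^2)⁻¹)^2 * ∫ ω, (S (n^2) ω)^2 ∂μ
          ≤ ((((n:ℝ))^2)⁻¹)^2 * ((n:ℝ))^2 := mul_le_mul_of_nonneg_left h3 (by positivity)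
        _ = (((n:ℝ))^2)⁻¹ := by field_simp
  have hsum : Summable (fun n : ℕ => (((n:ℝ))^2)⁻¹) := by
    simpa [one_div] using Real.summable_one_div_nat_pow.2 (by norm_num : 1 < 2)
  have key : ∀ᵐ ω ∂μ, Tendsto (fun n => Z n ω) atTop (nhds 0) := by
    have hZm : ∀ n, Measurable (fun ω => ENNReal.ofReal ((Z n ω)^2)) := fun n =>
      ((hmZ n).pow_const 2).ennreal_ofReal
    have hfin : ∫⁻ ω, ∑' n, ENNReal.ofReal ((Z n ω)^2) ∂μ ≠ ⊤ := by
      rw [lintegral_tsum fun n => (hZm n).aemeasurable]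
      have hle : ∀ n, ∫⁻ ω, ENNReal.ofReal ((Z n ω)^2) ∂μ
          ≤ ENNReal.ofReal ((((n:ℝ))^2)⁻¹) := by
        intro n
        rw [← ofReal_integral_eq_lintegral_ofReal (hintZ2 n)
          (ae_of_all _ fun ω => sq_nonneg _)]
        exact ENNReal.ofReal_le_ofReal (hZvar n)
      refine ne_top_of_le_ne_top ?_ (ENNReal.tsum_le_tsum hle)
      rw [← ENNReal.ofReal_tsum_of_nonneg (fun n => by positivity) hsum]
      exact ENNReal.ofReal_ne_top
    filter_upwards [ae_lt_top (Measurable.ennreal_tsum hZm) hfin] with ω hω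
    have h0 : Tendsto (fun n => ENNReal.ofReal ((Z n ω)^2)) atTop (nhds 0) :=
      ENNReal.tendsto_atTop_zero_of_tsum_ne_top hω.ne
    have h1 : Tendsto (fun n => (Z n ω)^2) atTop (nhds 0) := by
      have h2 := (ENNReal.tendsto_toReal (by simp)).comp h0
      simp only [Function.comp_def] at h2
      have h3 : (fun n => (ENNReal.ofReal ((Z n ω)^2)).toReal) = fun n => (Z n ω)^2 := by
        funext n; exact ENNReal.toReal_ofReal (sq_nonneg _)
      rw [h3] at h2
      simpa using h2
    rw [tendsto_zero_iff_abs_tendsto_zero]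
    have h4 := (Real.continuous_sqrt.tendsto 0).comp h1
    simp only [Function.comp_def] at h4
    have h5 : (fun n => Real.sqrt ((Z n ω)^2)) = fun n => |Z n ω| := by
      funext n; exact Real.sqrt_sq_eq_abs _
    rw [h5] at h4
    have h6 : (abs ∘ fun n => Z n ω) = fun n => |Z n ω| := rfl
    rw [h6]
    simpa [Real.sqrt_zero] using h4
  filter_upwards [key] with ω hω
  have habs : Tendsto (fun n => |Z n ω|) atTop (nhds 0) := by
    have := (tendsto_zero_iff_abs_tendsto_zero (fun n => Z n ω)).1 hω
    simpa [Function.comp_def] using this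
  have hsqrt_tendsto : Tendsto (fun p : ℕ => Nat.sqrt p) atTop atTop := by
    refine Filter.tendsto_atTop_atTop.2 fun b => ⟨b*b, fun a ha => Nat.le_sqrt.2 ?_⟩
    exact le_trans (le_refl _) ha
  have t2' : Tendsto (fun n : ℕ => (2*(n:ℝ)+1) / ((n:ℝ))^2) atTop (nhds 0) := by
    have h3 : Tendsto (fun n : ℕ => 3 / (n:ℝ)) atTop (nhds 0) :=
      tendsto_const_div_atTop_nhds_zero_nat 3
    refine squeeze_zero' ?_ ?_ h3
    · filter_upwards [eventually_ge_atTop 1] with n hn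
      have hn' : (1:ℝ) ≤ n := by exact_mod_cast hn
      positivity
    · filter_upwards [eventually_ge_atTop 1] with n hn
      have hn' : (1:ℝ) ≤ n := by exact_mod_cast hn
      rw [div_le_div_iff₀ (by positivity) (by positivity)]
      nlinarith
  have t1 : Tendsto (fun p : ℕ => |Z (Nat.sqrt p) ω|) atTop (nhds 0) :=
    habs.comp hsqrt_tendsto
  have t2 : Tendsto (fun p : ℕ => (2*((Nat.sqrt p : ℕ):ℝ)+1) / (((Nat.sqrt p : ℕ):ℝ))^2)
      atTop (nhds 0) := t2'.comp hsqrt_tendsto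
  have hSrepr : (fun p : ℕ => (p:ℝ)⁻¹ * ∑ j ∈ Finset.range p, (X j ω - E j))
      = fun p : ℕ => (p:ℝ)⁻¹ * S p ω := by
    funext p; simp only [hSdef, hYdef]
  rw [hSrepr, tendsto_zero_iff_abs_tendsto_zero]
  have hbound : ∀ᶠ p : ℕ in atTop, |(p:ℝ)⁻¹ * S p ω|
      ≤ |Z (Nat.sqrt p) ω| + (2*((Nat.sqrt p : ℕ):ℝ)+1) / (((Nat.sqrt p : ℕ):ℝ))^2 := by
    filter_upwards [eventually_ge_atTop 1] with p hp
    set n := Nat.sqrt p with hn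
    have hn1 : 1 ≤ n := by
      rw [hn]
      exact Nat.le_sqrt.2 (by simpa using hp)
    have hlow : n^2 ≤ p := by
      have := Nat.sqrt_le' p
      simpa [hn, pow_two] using this
    have hhigh : p ≤ n^2 + 2*n := by
      have h7 := Nat.lt_succ_sqrt p
      have : p < (n+1)*(n+1) := by simpa [hn] using h7
      nlinarith
    have hr0 : (0:ℝ) < ((n:ℝ))^2 := by
      have : (1:ℝ) ≤ (n:ℝ) := by exact_mod_cast hn1
      positivity
    have hrp : (0:ℝ) < (p:ℝ) := by
      have : (1:ℝ) ≤ (p:ℝ) := by exact_mod_cast hp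
      linarith
    have hlowR : ((n:ℝ))^2 ≤ (p:ℝ) := by exact_mod_cast (by exact_mod_cast hlow : (n^2 : ℕ) ≤ p)
    have hhighR : (p:ℝ) ≤ ((n:ℝ))^2 + 2*(n:ℝ) := by
      have : ((p:ℕ):ℝ) ≤ ((n^2 + 2*n : ℕ):ℝ) := by exact_mod_cast hhigh
      push_cast at this
      linarith
    have hdiff : |S p ω - S (n^2) ω| ≤ (p:ℝ) - ((n:ℝ))^2 := by
      have hsub : S p ω - S (n^2) ω = ∑ j ∈ Finset.Ico (n^2) p, Y j ω := by
        simp only [hSdef]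
        rw [Finset.sum_Ico_eq_sub _ hlow]
      rw [hsub]
      calc |∑ j ∈ Finset.Ico (n^2) p, Y j ω| ≤ ∑ j ∈ Finset.Ico (n^2) p, |Y j ω| :=
            Finset.abs_sum_le_sum_abs _ _
        _ ≤ ∑ _j ∈ Finset.Ico (n^2) p, (1:ℝ) := Finset.sum_le_sum fun j _ => hYb j ω
        _ = ((p - n^2 : ℕ) : ℝ) := by simp [Nat.card_Ico]
        _ = (p:ℝ) - ((n:ℝ))^2 := by
            rw [Nat.cast_sub hlow]
            push_cast
            ring
    have h6 : |S p ω| ≤ |S (n^2) ω| + (2*(n:ℝ) + 1) := by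
      have h7 := abs_sub_abs_le_abs_sub (S p ω) (S (n^2) ω)
      linarith
    have habsS : (0:ℝ) ≤ |S (n^2) ω| + (2*(n:ℝ)+1) := by positivity
    calc |(p:ℝ)⁻¹ * S p ω| = (p:ℝ)⁻¹ * |S p ω| := by
          rw [abs_mul, abs_of_nonneg (by positivity : (0:ℝ) ≤ (p:ℝ)⁻¹)]
      _ ≤ (((n:ℝ))^2)⁻¹ * (|S (n^2) ω| + (2*(n:ℝ)+1)) := by
          apply mul_le_mul (by
            exact inv_anti₀ hr0 hlowR) h6 (abs_nonneg _) (by positivity)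
      _ = |Z n ω| + (2*(n:ℝ)+1) / ((n:ℝ))^2 := by
          have hZabs : |Z n ω| = (((n:ℝ))^2)⁻¹ * |S (n^2) ω| := by
            simp only [hZdef]
            rw [abs_mul, abs_inv, abs_of_nonneg (le_of_lt hr0)]
          rw [hZabs]
          field_simp
  have h9 : Tendsto (fun p : ℕ => |(p:ℝ)⁻¹ * S p ω|) atTop (nhds 0) := by
    refine squeeze_zero' (Filter.Eventually.of_forall fun p => abs_nonneg _) hbound ?_
    simpa using t1.add t2
  simpa [Function.comp_def] using h9


lemma card_factor (A : Finset ℕ) (p : ℕ) (s : ℝ) :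
    (p:ℝ)⁻¹ * s = ((A.card : ℝ)/p) * ((A.card : ℝ)⁻¹ * s) ∨ (A.card : ℝ)⁻¹ * 0 = 0 := by
  exact Or.inr (by simp)

lemma card_factor' {A : Finset ℕ} {p : ℕ} (f : ℕ → ℝ) :
    (p:ℝ)⁻¹ * ∑ j ∈ A, f j = ((A.card : ℝ)/p) * ((A.card : ℝ)⁻¹ * ∑ j ∈ A, f j) := by
  rcases eq_or_ne A.card 0 with h|h
  · have hA : A = ∅ := Finset.card_eq_zero.1 h
    simp [hA]
  · have hc : ((A.card : ℕ):ℝ) ≠ 0 := Nat.cast_ne_zero.2 h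
    have : ((A.card : ℝ)/p) * ((A.card : ℝ)⁻¹ * ∑ j ∈ A, f j)
        = (((A.card:ℝ)) * ((A.card:ℝ))⁻¹) * ((p:ℝ)⁻¹ * ∑ j ∈ A, f j) := by
      rw [div_eq_mul_inv]
      ring
    rw [this, mul_inv_cancel₀ hc, one_mul]

lemma avg_integral_tendsto {A : ℕ → Finset ℕ} {f : ℕ → ℝ → ℝ} {flim : ℝ → ℝ} {c : ℝ}
    (hA : ∀ p, (A p).card ≤ p)
    (hcard : Tendsto (fun p : ℕ => ((A p).card : ℝ) / p) atTop (nhds c))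
    (hcont : ∀ p, ∀ j ∈ A p, Continuous (f j))
    (hbd : ∀ p, ∀ j ∈ A p, ∀ t ∈ Ioc (0:ℝ) 1, f j t ∈ Icc (0:ℝ) 1)
    (hunif : TendstoUniformlyOn
      (fun (p : ℕ) (t : ℝ) => ((A p).card : ℝ)⁻¹ * ∑ j ∈ A p, f j t) flim atTop (Icc 0 1)) :
    Tendsto (fun p : ℕ => (p:ℝ)⁻¹ * ∑ j ∈ A p, ∫ t in Ioc (0:ℝ) 1, f j t) atTop
      (nhds (c * ∫ t in Ioc (0:ℝ) 1, flim t)) := by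
  have hrepr : ∀ p : ℕ, (p:ℝ)⁻¹ * ∑ j ∈ A p, ∫ t in Ioc (0:ℝ) 1, f j t
      = ∫ t in Ioc (0:ℝ) 1, ((p:ℝ)⁻¹ * ∑ j ∈ A p, f j t) := by
    intro p
    rw [← integral_finset_sum _ (fun j hj => (hcont p j hj).integrableOn_Ioc),
      ← integral_const_mul]
  have hlim_eq : c * ∫ t in Ioc (0:ℝ) 1, flim t = ∫ t in Ioc (0:ℝ) 1, c * flim t :=
    (integral_const_mul c _).symm
  rw [hlim_eq, funext hrepr]
  refine tendsto_integral_of_dominated_convergence (fun _ => (1:ℝ)) ?_ ?_ ?_ ?_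
  · intro p
    exact (continuous_const.mul (continuous_finset_sum _ fun j hj => hcont p j hj)).aestronglyMeasurable
  · exact integrableOn_const (by simp [Real.volume_Ioc])
  · intro p
    filter_upwards [ae_restrict_mem measurableSet_Ioc] with t ht
    have h1 : ∑ j ∈ A p, f j t ≤ (A p).card := by
      calc ∑ j ∈ A p, f j t ≤ ∑ _j ∈ A p, (1:ℝ) :=
            Finset.sum_le_sum fun j hj => (hbd p j hj t ht).2
        _ = (A p).card := by simp
    have h0 : (0:ℝ) ≤ ∑ j ∈ A p, f j t :=
      Finset.sum_nonneg fun j hj => (hbd p j hj t ht).1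
    rw [Real.norm_eq_abs, abs_of_nonneg (by positivity)]
    calc (p:ℝ)⁻¹ * ∑ j ∈ A p, f j t ≤ (p:ℝ)⁻¹ * (A p).card :=
          mul_le_mul_of_nonneg_left h1 (by positivity)
      _ ≤ 1 := by
          rcases Nat.eq_zero_or_pos p with h|h
          · simp [h]
          · have hp : (0:ℝ) < p := by exact_mod_cast h
            rw [inv_mul_le_iff₀ hp]
            have h9 : ((A p).card : ℝ) ≤ (p:ℝ) := by exact_mod_cast hA p
            linarith
  · filter_upwards [ae_restrict_mem measurableSet_Ioc] with t ht
    have hmem : t ∈ Icc (0:ℝ) 1 := Ioc_subset_Icc_self ht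
    have := hcard.mul (hunif.tendsto_at hmem)
    exact this.congr fun p => (card_factor' (fun j => f j t)).symm

lemma avg_integral2_tendsto {A : ℕ → Finset ℕ} {f g : ℕ → ℝ → ℝ} {Glim : ℝ → ℝ → ℝ} {c : ℝ}
    (hA : ∀ p, (A p).card ≤ p)
    (hcard : Tendsto (fun p : ℕ => ((A p).card : ℝ) / p) atTop (nhds c))
    (hcontf : ∀ p, ∀ j ∈ A p, Continuous (f j)) (hcontg : ∀ p, ∀ j ∈ A p, Continuous (g j))
    (hbdf : ∀ p, ∀ j ∈ A p, ∀ t ∈ Ioc (0:ℝ) 1, f j t ∈ Icc (0:ℝ) 1)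
    (hbdg : ∀ p, ∀ j ∈ A p, ∀ t ∈ Ioc (0:ℝ) 1, g j t ∈ Icc (0:ℝ) 1)
    (hunif : TendstoUniformlyOn
      (fun (p : ℕ) (z : ℝ × ℝ) => ((A p).card : ℝ)⁻¹ * ∑ j ∈ A p, f j z.1 * g j z.2)
      (fun z => Glim z.1 z.2) atTop (Icc 0 1 ×ˢ Icc 0 1)) :
    Tendsto (fun p : ℕ => (p:ℝ)⁻¹ * ∑ j ∈ A p,
        (∫ t in Ioc (0:ℝ) 1, f j t) * ∫ t in Ioc (0:ℝ) 1, g j t)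
      atTop (nhds (c * ∫ z in Ioc (0:ℝ) 1 ×ˢ Ioc (0:ℝ) 1, Glim z.1 z.2)) := by
  have hmeas_eq : (volume : Measure (ℝ × ℝ)).restrict (Ioc (0:ℝ) 1 ×ˢ Ioc (0:ℝ) 1)
      = (volume.restrict (Ioc (0:ℝ) 1)).prod (volume.restrict (Ioc (0:ℝ) 1)) := by
    rw [Measure.prod_restrict, ← Measure.volume_eq_prod]
  have hSvol : (volume : Measure (ℝ × ℝ)) (Ioc (0:ℝ) 1 ×ˢ Ioc (0:ℝ) 1) < ⊤ := by
    rw [Measure.volume_eq_prod, Measure.prod_prod]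
    simp [Real.volume_Ioc]
  have hprodI : ∀ (j : ℕ), (∫ t in Ioc (0:ℝ) 1, f j t) * ∫ t in Ioc (0:ℝ) 1, g j t
      = ∫ z in Ioc (0:ℝ) 1 ×ˢ Ioc (0:ℝ) 1, f j z.1 * g j z.2 := by
    intro j
    rw [hmeas_eq, integral_prod_mul (f := fun a => f j a) (g := fun a => g j a)]
  have hrepr : ∀ p : ℕ, (p:ℝ)⁻¹ * ∑ j ∈ A p,
      (∫ t in Ioc (0:ℝ) 1, f j t) * ∫ t in Ioc (0:ℝ) 1, g j t
      = ∫ z in Ioc (0:ℝ) 1 ×ˢ Ioc (0:ℝ) 1, ((p:ℝ)⁻¹ * ∑ j ∈ A p, f j z.1 * g j z.2) := by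
    intro p
    simp_rw [hprodI]
    rw [← integral_finset_sum _ (fun j hj => ?_), ← integral_const_mul]
    refine (integrableOn_const (C := (1:ℝ)) hSvol.ne).mono' ?_ ?_
    · exact (((hcontf p j hj).comp continuous_fst).mul
        ((hcontg p j hj).comp continuous_snd)).aestronglyMeasurable
    · filter_upwards [ae_restrict_mem (measurableSet_Ioc.prod measurableSet_Ioc)] with z hz
      have h1 := hbdf p j hj z.1 hz.1
      have h2 := hbdg p j hj z.2 hz.2
      rw [Real.norm_eq_abs, abs_of_nonneg (mul_nonneg h1.1 h2.1)]
      calc f j z.1 * g j z.2 ≤ 1 * 1 := mul_le_mul h1.2 h2.2 h2.1 zero_le_one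
        _ = 1 := one_mul 1
  have hlim_eq : c * ∫ z in Ioc (0:ℝ) 1 ×ˢ Ioc (0:ℝ) 1, Glim z.1 z.2
      = ∫ z in Ioc (0:ℝ) 1 ×ˢ Ioc (0:ℝ) 1, c * Glim z.1 z.2 :=
    (integral_const_mul c _).symm
  rw [hlim_eq, funext hrepr]
  refine tendsto_integral_of_dominated_convergence (fun _ => (1:ℝ)) ?_ ?_ ?_ ?_
  · intro p
    exact (continuous_const.mul (continuous_finset_sum _ fun j hj =>
      ((hcontf p j hj).comp continuous_fst).mul
        ((hcontg p j hj).comp continuous_snd))).aestronglyMeasurable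
  · exact integrableOn_const hSvol.ne
  · intro p
    filter_upwards [ae_restrict_mem (measurableSet_Ioc.prod measurableSet_Ioc)] with z hz
    have h1 : ∑ j ∈ A p, f j z.1 * g j z.2 ≤ (A p).card := by
      calc ∑ j ∈ A p, f j z.1 * g j z.2 ≤ ∑ _j ∈ A p, (1:ℝ) := by
            refine Finset.sum_le_sum fun j hj => ?_
            have h1 := hbdf p j hj z.1 hz.1
            have h2 := hbdg p j hj z.2 hz.2
            calc f j z.1 * g j z.2 ≤ 1 * 1 := mul_le_mul h1.2 h2.2 h2.1 zero_le_one
              _ = 1 := one_mul 1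
        _ = (A p).card := by simp
    have h0 : (0:ℝ) ≤ ∑ j ∈ A p, f j z.1 * g j z.2 :=
      Finset.sum_nonneg fun j hj => mul_nonneg (hbdf p j hj z.1 hz.1).1 (hbdg p j hj z.2 hz.2).1
    rw [Real.norm_eq_abs, abs_of_nonneg (by positivity)]
    calc (p:ℝ)⁻¹ * ∑ j ∈ A p, f j z.1 * g j z.2 ≤ (p:ℝ)⁻¹ * (A p).card :=
          mul_le_mul_of_nonneg_left h1 (by positivity)
      _ ≤ 1 := by
          rcases Nat.eq_zero_or_pos p with h|h
          · simp [h]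
          · have hp : (0:ℝ) < p := by exact_mod_cast h
            rw [inv_mul_le_iff₀ hp]
            have h9 : ((A p).card : ℝ) ≤ (p:ℝ) := by exact_mod_cast hA p
            linarith
  · filter_upwards [ae_restrict_mem (measurableSet_Ioc.prod measurableSet_Ioc)] with z hz
    have hmem : z ∈ Icc (0:ℝ) 1 ×ˢ Icc (0:ℝ) 1 :=
      ⟨Ioc_subset_Icc_self hz.1, Ioc_subset_Icc_self hz.2⟩
    have := hcard.mul (hunif.tendsto_at hmem)
    exact this.congr fun p => (card_factor' (fun j => f j z.1 * g j z.2)).symm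

end CovAux


open Finset in
lemma sum_split (I1 I2 : ℕ → Bool) (p : ℕ) (h : ℕ → ℝ) :
    ∑ j ∈ Finset.range p, h j =
      ((∑ j ∈ Aab I1 I2 false false p, h j + ∑ j ∈ Aab I1 I2 false true p, h j) +
       ∑ j ∈ Aab I1 I2 true false p, h j) + ∑ j ∈ Aab I1 I2 true true p, h j := by
  classical
  have key : ∀ j, h j = (((if I1 j = false ∧ I2 j = false then h j else 0) +
      (if I1 j = false ∧ I2 j = true then h j else 0)) +
      (if I1 j = true ∧ I2 j = false then h j else 0)) +
      (if I1 j = true ∧ I2 j = true then h j else 0) := by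
    intro j; cases hI1 : I1 j <;> cases hI2 : I2 j <;> simp
  calc ∑ j ∈ Finset.range p, h j
      = ∑ j ∈ Finset.range p, ((((if I1 j = false ∧ I2 j = false then h j else 0) +
          (if I1 j = false ∧ I2 j = true then h j else 0)) +
          (if I1 j = true ∧ I2 j = false then h j else 0)) +
          (if I1 j = true ∧ I2 j = true then h j else 0)) :=
        Finset.sum_congr rfl fun j _ => key j
    _ = _ := by
        rw [Finset.sum_add_distrib, Finset.sum_add_distrib, Finset.sum_add_distrib]
        simp only [Aab, Finset.sum_filter]

lemma mem_Aab {I1 I2 : ℕ → Bool} {a b : Bool} {p j : ℕ} (hj : j ∈ Aab I1 I2 a b p) :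
    I1 j = a ∧ I2 j = b := by
  simp only [Aab, Finset.mem_filter] at hj
  exact hj.2

lemma card_Aab_le (I1 I2 : ℕ → Bool) (a b : Bool) (p : ℕ) : (Aab I1 I2 a b p).card ≤ p := by
  simpa [Aab] using Finset.card_filter_le (Finset.range p) (fun j => I1 j = a ∧ I2 j = b)

end AuxSection

set_option maxHeartbeats 2000000 in
/-- The almost-sure limit of the empirical covariance of the two p-value sequences,
from the proof of Theorem 4.  Here `ν1, ν2, ν12` are the probability measures on `[0,1]`
(resp. `[0,1]²`) whose CDFs are the limiting alternative distributions `F¹₁, F¹₂, G¹`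
of Assumption 1, so that `μ¹_k = ∫ t dF¹_k(t)` and `σ¹₁₂ = ∫ t₁ t₂ dG¹(t₁,t₂)`. -/
theorem covariance_limit
    {Ω : Type*} [MeasurableSpace Ω] (μ : Measure Ω) [IsProbabilityMeasure μ]
    (I1 I2 : ℕ → Bool) (P1 P2 : ℕ → Ω → ℝ)
    (F1 F2 : ℕ → ℝ → ℝ)  -- the alternative CDFs `F¹_{kj}`
    (hmeas1 : ∀ j, Measurable (P1 j)) (hmeas2 : ∀ j, Measurable (P2 j))
    (hrange1 : ∀ j ω, P1 j ω ∈ Icc (0:ℝ) 1) (hrange2 : ∀ j ω, P2 j ω ∈ Icc (0:ℝ) 1)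
    (hindep : iIndepFun
      (fun kj : Bool × ℕ => if kj.1 then P2 kj.2 else P1 kj.2) μ)
    (hnull1 : ∀ j, I1 j = false → ∀ t ∈ Icc (0:ℝ) 1, (μ {ω | P1 j ω ≤ t}).toReal = t)
    (hnull2 : ∀ j, I2 j = false → ∀ t ∈ Icc (0:ℝ) 1, (μ {ω | P2 j ω ≤ t}).toReal = t)
    (halt1 : ∀ j, I1 j = true → Continuous (F1 j) ∧
      (∀ t ∈ Icc (0:ℝ) 1, (μ {ω | P1 j ω ≤ t}).toReal = F1 j t) ∧
      (∀ t ∈ Icc (0:ℝ) 1, t ≤ F1 j t))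
    (halt2 : ∀ j, I2 j = true → Continuous (F2 j) ∧
      (∀ t ∈ Icc (0:ℝ) 1, (μ {ω | P2 j ω ≤ t}).toReal = F2 j t) ∧
      (∀ t ∈ Icc (0:ℝ) 1, t ≤ F2 j t))
    -- Assumption 1:
    (F1lim F2lim : ℝ → ℝ) (G1lim : ℝ → ℝ → ℝ) (π : Bool → Bool → ℝ)
    (hF1cont : ContinuousOn F1lim (Icc 0 1)) (hF2cont : ContinuousOn F2lim (Icc 0 1))
    (hG1cont : ContinuousOn (fun z : ℝ × ℝ => G1lim z.1 z.2) (Icc 0 1 ×ˢ Icc 0 1))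
    (hunif2 : ∀ a, TendstoUniformlyOn
      (fun p t => ((Aab I1 I2 a true p).card : ℝ)⁻¹ * ∑ j ∈ Aab I1 I2 a true p, F2 j t)
      F2lim atTop (Icc 0 1))
    (hunif1 : ∀ b, TendstoUniformlyOn
      (fun p t => ((Aab I1 I2 true b p).card : ℝ)⁻¹ * ∑ j ∈ Aab I1 I2 true b p, F1 j t)
      F1lim atTop (Icc 0 1))
    (hunifG : TendstoUniformlyOn
      (fun p z => ((Aab I1 I2 true true p).card : ℝ)⁻¹ *
        ∑ j ∈ Aab I1 I2 true true p, F1 j z.1 * F2 j z.2)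
      (fun z : ℝ × ℝ => G1lim z.1 z.2) atTop (Icc 0 1 ×ˢ Icc 0 1))
    (hπ : ∀ a b, Tendsto (fun p => ((Aab I1 I2 a b p).card : ℝ) / p) atTop (nhds (π a b)))
    (hπnn : ∀ a b, 0 ≤ π a b)
    -- the measures realizing the limiting alternative distributions
    (ν1 ν2 : Measure ℝ) [IsProbabilityMeasure ν1] [IsProbabilityMeasure ν2]
    (ν12 : Measure (ℝ × ℝ)) [IsProbabilityMeasure ν12]
    (hν1supp : ν1 (Icc (0:ℝ) 1) = 1) (hν2supp : ν2 (Icc (0:ℝ) 1) = 1)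
    (hν12supp : ν12 (Icc (0:ℝ) 1 ×ˢ Icc (0:ℝ) 1) = 1)
    (hν1cdf : ∀ t ∈ Icc (0:ℝ) 1, (ν1 (Iic t)).toReal = F1lim t)
    (hν2cdf : ∀ t ∈ Icc (0:ℝ) 1, (ν2 (Iic t)).toReal = F2lim t)
    (hν12cdf : ∀ t1 ∈ Icc (0:ℝ) 1, ∀ t2 ∈ Icc (0:ℝ) 1,
      (ν12 (Iic t1 ×ˢ Iic t2)).toReal = G1lim t1 t2) :
    ∀ᵐ ω ∂μ, Tendsto (fun p => sigmaHat P1 P2 p ω) atTop (nhds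
      ((π true true - (π true false + π true true) * (π false true + π true true)) *
          (1 / 2 - ∫ x, x ∂ν1) * (1 / 2 - ∫ x, x ∂ν2) +
        π true true * ((∫ z, z.1 * z.2 ∂ν12) - (∫ x, x ∂ν1) * ∫ x, x ∂ν2))) := by
    classical
  -- measurability of the joint family
  have hfam_meas : ∀ kj : Bool × ℕ,
      Measurable ((fun kj : Bool × ℕ => if kj.1 then P2 kj.2 else P1 kj.2) kj) := by
    rintro ⟨k, j⟩
    cases k
    · simpa using hmeas1 j
    · simpa using hmeas2 j
  -- independence facts
  have hind12 : ∀ j, IndepFun (P1 j) (P2 j) μ := by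
    intro j
    have h := hindep.indepFun (i := (false, j)) (j := (true, j)) (by simp)
    simpa using h
  have hpair1 : ∀ i j, i ≠ j → IndepFun (P1 i) (P1 j) μ := by
    intro i j hij
    have h := hindep.indepFun (i := (false, i)) (j := (false, j)) (by simp [hij])
    simpa using h
  have hpair2 : ∀ i j, i ≠ j → IndepFun (P2 i) (P2 j) μ := by
    intro i j hij
    have h := hindep.indepFun (i := (true, i)) (j := (true, j)) (by simp [hij])
    simpa using h
  have hpair12 : ∀ i j, i ≠ j →
      IndepFun (fun ω => P1 i ω * P2 i ω) (fun ω => P1 j ω * P2 j ω) μ := by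
    intro i j hij
    have h := hindep.indepFun_prodMk_prodMk hfam_meas (false, i) (true, i) (false, j) (true, j)
      (by simp [Prod.ext_iff, hij]) (by simp [Prod.ext_iff]) (by simp [Prod.ext_iff])
      (by simp [Prod.ext_iff, hij])
    have h2 := h.comp (φ := fun q : ℝ × ℝ => q.1 * q.2) (ψ := fun q : ℝ × ℝ => q.1 * q.2)
      (measurable_fst.mul measurable_snd) (measurable_fst.mul measurable_snd)
    simpa [Function.comp_def] using h2
  -- integrability
  have habs1 : ∀ j ω, |P1 j ω| ≤ 1 := fun j ω => abs_le.2
    ⟨by linarith [(hrange1 j ω).1], (hrange1 j ω).2⟩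
  have habs2 : ∀ j ω, |P2 j ω| ≤ 1 := fun j ω => abs_le.2
    ⟨by linarith [(hrange2 j ω).1], (hrange2 j ω).2⟩
  have hint1 : ∀ j, Integrable (P1 j) μ := fun j =>
    CovAux.integrable_bdd (hmeas1 j).aestronglyMeasurable (habs1 j)
  have hint2 : ∀ j, Integrable (P2 j) μ := fun j =>
    CovAux.integrable_bdd (hmeas2 j).aestronglyMeasurable (habs2 j)
  have hrange12 : ∀ j ω, P1 j ω * P2 j ω ∈ Icc (0:ℝ) 1 := fun j ω =>
    ⟨mul_nonneg (hrange1 j ω).1 (hrange2 j ω).1,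
     by nlinarith [(hrange1 j ω).1, (hrange1 j ω).2, (hrange2 j ω).1, (hrange2 j ω).2]⟩
  -- expectations
  have hprodE : ∀ j, ∫ ω, P1 j ω * P2 j ω ∂μ = (∫ ω, P1 j ω ∂μ) * ∫ ω, P2 j ω ∂μ := fun j =>
    (hind12 j).integral_fun_mul_eq_mul_integral (hint1 j).aestronglyMeasurable (hint2 j).aestronglyMeasurable
  have hcdfE1 : ∀ j, ∫ ω, P1 j ω ∂μ = ∫ t in Ioc (0:ℝ) 1, (1 - (μ {ω | P1 j ω ≤ t}).toReal) :=
    fun j => CovAux.exp_eq_cdf (hmeas1 j) (ae_of_all _ (hrange1 j))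
  have hcdfE2 : ∀ j, ∫ ω, P2 j ω ∂μ = ∫ t in Ioc (0:ℝ) 1, (1 - (μ {ω | P2 j ω ≤ t}).toReal) :=
    fun j => CovAux.exp_eq_cdf (hmeas2 j) (ae_of_all _ (hrange2 j))
  have hint_half : ∫ t in Ioc (0:ℝ) 1, (1 - t) = (1/2 : ℝ) := by
    rw [← intervalIntegral.integral_of_le zero_le_one,
      intervalIntegral.integral_sub intervalIntegrable_const intervalIntegral.intervalIntegrable_id,
      intervalIntegral.integral_const, integral_id]
    norm_num
  have hnullE1 : ∀ j, I1 j = false → ∫ ω, P1 j ω ∂μ = 1/2 := by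
    intro j hj
    rw [hcdfE1 j, setIntegral_congr_fun measurableSet_Ioc (fun t ht => by
      show (1 - (μ {ω | P1 j ω ≤ t}).toReal) = 1 - t
      rw [hnull1 j hj t (Ioc_subset_Icc_self ht)])]
    exact hint_half
  have hnullE2 : ∀ j, I2 j = false → ∫ ω, P2 j ω ∂μ = 1/2 := by
    intro j hj
    rw [hcdfE2 j, setIntegral_congr_fun measurableSet_Ioc (fun t ht => by
      show (1 - (μ {ω | P2 j ω ≤ t}).toReal) = 1 - t
      rw [hnull2 j hj t (Ioc_subset_Icc_self ht)])]
    exact hint_half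
  have haltE1 : ∀ j, I1 j = true →
      ∫ ω, P1 j ω ∂μ = 1 - ∫ t in Ioc (0:ℝ) 1, F1 j t := by
    intro j hj
    rw [hcdfE1 j, setIntegral_congr_fun measurableSet_Ioc (fun t ht => by
      show (1 - (μ {ω | P1 j ω ≤ t}).toReal) = 1 - F1 j t
      rw [(halt1 j hj).2.1 t (Ioc_subset_Icc_self ht)])]
    rw [integral_sub (integrableOn_const (C := (1:ℝ)) (s := Ioc (0:ℝ) 1) (μ := volume) (by simp [Real.volume_Ioc]))
      ((halt1 j hj).1.integrableOn_Ioc)]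
    simp [Real.volume_Ioc]
  have haltE2 : ∀ j, I2 j = true →
      ∫ ω, P2 j ω ∂μ = 1 - ∫ t in Ioc (0:ℝ) 1, F2 j t := by
    intro j hj
    rw [hcdfE2 j, setIntegral_congr_fun measurableSet_Ioc (fun t ht => by
      show (1 - (μ {ω | P2 j ω ≤ t}).toReal) = 1 - F2 j t
      rw [(halt2 j hj).2.1 t (Ioc_subset_Icc_self ht)])]
    rw [integral_sub (integrableOn_const (C := (1:ℝ)) (s := Ioc (0:ℝ) 1) (μ := volume) (by simp [Real.volume_Ioc]))
      ((halt2 j hj).1.integrableOn_Ioc)]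
    simp [Real.volume_Ioc]
  -- CDF values are in [0,1]
  have hF1r : ∀ j, I1 j = true → ∀ t ∈ Ioc (0:ℝ) 1, F1 j t ∈ Icc (0:ℝ) 1 := by
    intro j hj t ht
    rw [← (halt1 j hj).2.1 t (Ioc_subset_Icc_self ht)]
    refine ⟨ENNReal.toReal_nonneg, ?_⟩
    calc (μ {ω | P1 j ω ≤ t}).toReal ≤ (μ univ).toReal :=
          ENNReal.toReal_mono (measure_ne_top _ _) (measure_mono (subset_univ _))
      _ = 1 := by simp
  have hF2r : ∀ j, I2 j = true → ∀ t ∈ Ioc (0:ℝ) 1, F2 j t ∈ Icc (0:ℝ) 1 := by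
    intro j hj t ht
    rw [← (halt2 j hj).2.1 t (Ioc_subset_Icc_self ht)]
    refine ⟨ENNReal.toReal_nonneg, ?_⟩
    calc (μ {ω | P2 j ω ≤ t}).toReal ≤ (μ univ).toReal :=
          ENNReal.toReal_mono (measure_ne_top _ _) (measure_mono (subset_univ _))
      _ = 1 := by simp
  -- averaging limits from Assumption 1
  have hT : ∀ b : Bool, Tendsto
      (fun p : ℕ => (p:ℝ)⁻¹ * ∑ j ∈ Aab I1 I2 true b p, ∫ t in Ioc (0:ℝ) 1, F1 j t) atTop
      (nhds (π true b * ∫ t in Ioc (0:ℝ) 1, F1lim t)) := by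
    intro b
    refine CovAux.avg_integral_tendsto (card_Aab_le I1 I2 true b) (hπ true b)
      (fun p j hj => (halt1 j (mem_Aab hj).1).1)
      (fun p j hj => hF1r j (mem_Aab hj).1) (hunif1 b)
  have hS : ∀ a : Bool, Tendsto
      (fun p : ℕ => (p:ℝ)⁻¹ * ∑ j ∈ Aab I1 I2 a true p, ∫ t in Ioc (0:ℝ) 1, F2 j t) atTop
      (nhds (π a true * ∫ t in Ioc (0:ℝ) 1, F2lim t)) := by
    intro a
    refine CovAux.avg_integral_tendsto (card_Aab_le I1 I2 a true) (hπ a true)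
      (fun p j hj => (halt2 j (mem_Aab hj).2).1)
      (fun p j hj => hF2r j (mem_Aab hj).2) (hunif2 a)
  have hTG : Tendsto (fun p : ℕ => (p:ℝ)⁻¹ * ∑ j ∈ Aab I1 I2 true true p,
      (∫ t in Ioc (0:ℝ) 1, F1 j t) * ∫ t in Ioc (0:ℝ) 1, F2 j t) atTop
      (nhds (π true true * ∫ z in Ioc (0:ℝ) 1 ×ˢ Ioc (0:ℝ) 1, G1lim z.1 z.2)) := by
    refine CovAux.avg_integral2_tendsto (card_Aab_le I1 I2 true true) (hπ true true)
      (fun p j hj => (halt1 j (mem_Aab hj).1).1)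
      (fun p j hj => (halt2 j (mem_Aab hj).2).1)
      (fun p j hj => hF1r j (mem_Aab hj).1)
      (fun p j hj => hF2r j (mem_Aab hj).2) hunifG
    -- deterministic limits of the averaged expectations
  have hdet1 : Tendsto (fun p : ℕ => (p:ℝ)⁻¹ * ∑ j ∈ Finset.range p, ∫ ω, P1 j ω ∂μ) atTop
      (nhds (((π false false * (1/2) + π false true * (1/2)) +
        (π true false - π true false * ∫ t in Ioc (0:ℝ) 1, F1lim t)) +
        (π true true - π true true * ∫ t in Ioc (0:ℝ) 1, F1lim t))) := by
    have hre : ∀ p : ℕ, (p:ℝ)⁻¹ * ∑ j ∈ Finset.range p, ∫ ω, P1 j ω ∂μ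
        = (((((Aab I1 I2 false false p).card : ℝ)/p) * (1/2)
            + (((Aab I1 I2 false true p).card : ℝ)/p) * (1/2))
          + ((((Aab I1 I2 true false p).card : ℝ)/p)
            - (p:ℝ)⁻¹ * ∑ j ∈ Aab I1 I2 true false p, ∫ t in Ioc (0:ℝ) 1, F1 j t))
          + ((((Aab I1 I2 true true p).card : ℝ)/p)
            - (p:ℝ)⁻¹ * ∑ j ∈ Aab I1 I2 true true p, ∫ t in Ioc (0:ℝ) 1, F1 j t) := by
      intro p
      have h00 : ∑ j ∈ Aab I1 I2 false false p, ∫ ω, P1 j ω ∂μ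
          = ((Aab I1 I2 false false p).card : ℝ) * (1/2) := by
        rw [Finset.sum_congr rfl (fun j hj => hnullE1 j (mem_Aab hj).1),
          Finset.sum_const, nsmul_eq_mul]
      have h01 : ∑ j ∈ Aab I1 I2 false true p, ∫ ω, P1 j ω ∂μ
          = ((Aab I1 I2 false true p).card : ℝ) * (1/2) := by
        rw [Finset.sum_congr rfl (fun j hj => hnullE1 j (mem_Aab hj).1),
          Finset.sum_const, nsmul_eq_mul]
      have h10 : ∑ j ∈ Aab I1 I2 true false p, ∫ ω, P1 j ω ∂μ
          = ((Aab I1 I2 true false p).card : ℝ)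
            - ∑ j ∈ Aab I1 I2 true false p, ∫ t in Ioc (0:ℝ) 1, F1 j t := by
        rw [Finset.sum_congr rfl (fun j hj => haltE1 j (mem_Aab hj).1),
          Finset.sum_sub_distrib, Finset.sum_const, nsmul_eq_mul, mul_one]
      have h11 : ∑ j ∈ Aab I1 I2 true true p, ∫ ω, P1 j ω ∂μ
          = ((Aab I1 I2 true true p).card : ℝ)
            - ∑ j ∈ Aab I1 I2 true true p, ∫ t in Ioc (0:ℝ) 1, F1 j t := by
        rw [Finset.sum_congr rfl (fun j hj => haltE1 j (mem_Aab hj).1),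
          Finset.sum_sub_distrib, Finset.sum_const, nsmul_eq_mul, mul_one]
      rw [sum_split I1 I2 p, h00, h01, h10, h11]
      ring
    rw [funext hre]
    exact ((((hπ false false).mul_const (1/2)).add ((hπ false true).mul_const (1/2))).add
      ((hπ true false).sub (hT false))).add ((hπ true true).sub (hT true))
  have hdet2 : Tendsto (fun p : ℕ => (p:ℝ)⁻¹ * ∑ j ∈ Finset.range p, ∫ ω, P2 j ω ∂μ) atTop
      (nhds (((π false false * (1/2) +
        (π false true - π false true * ∫ t in Ioc (0:ℝ) 1, F2lim t)) +
        π true false * (1/2)) +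
        (π true true - π true true * ∫ t in Ioc (0:ℝ) 1, F2lim t))) := by
    have hre : ∀ p : ℕ, (p:ℝ)⁻¹ * ∑ j ∈ Finset.range p, ∫ ω, P2 j ω ∂μ
        = (((((Aab I1 I2 false false p).card : ℝ)/p) * (1/2)
          + ((((Aab I1 I2 false true p).card : ℝ)/p)
            - (p:ℝ)⁻¹ * ∑ j ∈ Aab I1 I2 false true p, ∫ t in Ioc (0:ℝ) 1, F2 j t))
          + (((Aab I1 I2 true false p).card : ℝ)/p) * (1/2))
          + ((((Aab I1 I2 true true p).card : ℝ)/p)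
            - (p:ℝ)⁻¹ * ∑ j ∈ Aab I1 I2 true true p, ∫ t in Ioc (0:ℝ) 1, F2 j t) := by
      intro p
      have h00 : ∑ j ∈ Aab I1 I2 false false p, ∫ ω, P2 j ω ∂μ
          = ((Aab I1 I2 false false p).card : ℝ) * (1/2) := by
        rw [Finset.sum_congr rfl (fun j hj => hnullE2 j (mem_Aab hj).2),
          Finset.sum_const, nsmul_eq_mul]
      have h01 : ∑ j ∈ Aab I1 I2 false true p, ∫ ω, P2 j ω ∂μ
          = ((Aab I1 I2 false true p).card : ℝ)
            - ∑ j ∈ Aab I1 I2 false true p, ∫ t in Ioc (0:ℝ) 1, F2 j t := by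
        rw [Finset.sum_congr rfl (fun j hj => haltE2 j (mem_Aab hj).2),
          Finset.sum_sub_distrib, Finset.sum_const, nsmul_eq_mul, mul_one]
      have h10 : ∑ j ∈ Aab I1 I2 true false p, ∫ ω, P2 j ω ∂μ
          = ((Aab I1 I2 true false p).card : ℝ) * (1/2) := by
        rw [Finset.sum_congr rfl (fun j hj => hnullE2 j (mem_Aab hj).2),
          Finset.sum_const, nsmul_eq_mul]
      have h11 : ∑ j ∈ Aab I1 I2 true true p, ∫ ω, P2 j ω ∂μ
          = ((Aab I1 I2 true true p).card : ℝ)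
            - ∑ j ∈ Aab I1 I2 true true p, ∫ t in Ioc (0:ℝ) 1, F2 j t := by
        rw [Finset.sum_congr rfl (fun j hj => haltE2 j (mem_Aab hj).2),
          Finset.sum_sub_distrib, Finset.sum_const, nsmul_eq_mul, mul_one]
      rw [sum_split I1 I2 p, h00, h01, h10, h11]
      ring
    rw [funext hre]
    exact ((((hπ false false).mul_const (1/2)).add ((hπ false true).sub (hS false))).add
      ((hπ true false).mul_const (1/2))).add ((hπ true true).sub (hS true))
  have hdet12 : Tendsto (fun p : ℕ =>
      (p:ℝ)⁻¹ * ∑ j ∈ Finset.range p, (∫ ω, P1 j ω ∂μ) * ∫ ω, P2 j ω ∂μ) atTop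
      (nhds ((((π false false * (1/4) +
        ((1/2) * (π false true - π false true * ∫ t in Ioc (0:ℝ) 1, F2lim t))) +
        ((1/2) * (π true false - π true false * ∫ t in Ioc (0:ℝ) 1, F1lim t))) +
        ((π true true - π true true * ∫ t in Ioc (0:ℝ) 1, F1lim t)
          - π true true * ∫ t in Ioc (0:ℝ) 1, F2lim t))
          + π true true * ∫ z in Ioc (0:ℝ) 1 ×ˢ Ioc (0:ℝ) 1, G1lim z.1 z.2)) := by
    have hre : ∀ p : ℕ,
        (p:ℝ)⁻¹ * ∑ j ∈ Finset.range p, (∫ ω, P1 j ω ∂μ) * ∫ ω, P2 j ω ∂μ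
        = ((((((Aab I1 I2 false false p).card : ℝ)/p) * (1/4)
          + (1/2) * ((((Aab I1 I2 false true p).card : ℝ)/p)
            - (p:ℝ)⁻¹ * ∑ j ∈ Aab I1 I2 false true p, ∫ t in Ioc (0:ℝ) 1, F2 j t))
          + (1/2) * ((((Aab I1 I2 true false p).card : ℝ)/p)
            - (p:ℝ)⁻¹ * ∑ j ∈ Aab I1 I2 true false p, ∫ t in Ioc (0:ℝ) 1, F1 j t))
          + (((((Aab I1 I2 true true p).card : ℝ)/p)
            - (p:ℝ)⁻¹ * ∑ j ∈ Aab I1 I2 true true p, ∫ t in Ioc (0:ℝ) 1, F1 j t)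
            - (p:ℝ)⁻¹ * ∑ j ∈ Aab I1 I2 true true p, ∫ t in Ioc (0:ℝ) 1, F2 j t))
            + (p:ℝ)⁻¹ * ∑ j ∈ Aab I1 I2 true true p,
                (∫ t in Ioc (0:ℝ) 1, F1 j t) * ∫ t in Ioc (0:ℝ) 1, F2 j t := by
      intro p
      have h00 : ∑ j ∈ Aab I1 I2 false false p, (∫ ω, P1 j ω ∂μ) * ∫ ω, P2 j ω ∂μ
          = ((Aab I1 I2 false false p).card : ℝ) * (1/4) := by
        calc ∑ j ∈ Aab I1 I2 false false p, (∫ ω, P1 j ω ∂μ) * ∫ ω, P2 j ω ∂μ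
            = ∑ _j ∈ Aab I1 I2 false false p, ((1:ℝ)/4) :=
              Finset.sum_congr rfl (fun j hj => by
                rw [hnullE1 j (mem_Aab hj).1, hnullE2 j (mem_Aab hj).2]; norm_num)
          _ = ((Aab I1 I2 false false p).card : ℝ) * (1/4) := by
              rw [Finset.sum_const, nsmul_eq_mul]
      have h01 : ∑ j ∈ Aab I1 I2 false true p, (∫ ω, P1 j ω ∂μ) * ∫ ω, P2 j ω ∂μ
          = ((Aab I1 I2 false true p).card : ℝ) * (1/2)
            - (1/2) * ∑ j ∈ Aab I1 I2 false true p, ∫ t in Ioc (0:ℝ) 1, F2 j t := by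
        calc ∑ j ∈ Aab I1 I2 false true p, (∫ ω, P1 j ω ∂μ) * ∫ ω, P2 j ω ∂μ
            = ∑ j ∈ Aab I1 I2 false true p,
                ((1:ℝ)/2 - (1/2) * ∫ t in Ioc (0:ℝ) 1, F2 j t) :=
              Finset.sum_congr rfl (fun j hj => by
                rw [hnullE1 j (mem_Aab hj).1, haltE2 j (mem_Aab hj).2]; ring)
          _ = _ := by
              rw [Finset.sum_sub_distrib, Finset.sum_const, nsmul_eq_mul, ← Finset.mul_sum]
      have h10 : ∑ j ∈ Aab I1 I2 true false p, (∫ ω, P1 j ω ∂μ) * ∫ ω, P2 j ω ∂μ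
          = ((Aab I1 I2 true false p).card : ℝ) * (1/2)
            - (1/2) * ∑ j ∈ Aab I1 I2 true false p, ∫ t in Ioc (0:ℝ) 1, F1 j t := by
        calc ∑ j ∈ Aab I1 I2 true false p, (∫ ω, P1 j ω ∂μ) * ∫ ω, P2 j ω ∂μ
            = ∑ j ∈ Aab I1 I2 true false p,
                ((1:ℝ)/2 - (1/2) * ∫ t in Ioc (0:ℝ) 1, F1 j t) :=
              Finset.sum_congr rfl (fun j hj => by
                rw [haltE1 j (mem_Aab hj).1, hnullE2 j (mem_Aab hj).2]; ring)
          _ = _ := by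
              rw [Finset.sum_sub_distrib, Finset.sum_const, nsmul_eq_mul, ← Finset.mul_sum]
      have h11 : ∑ j ∈ Aab I1 I2 true true p, (∫ ω, P1 j ω ∂μ) * ∫ ω, P2 j ω ∂μ
          = ((((Aab I1 I2 true true p).card : ℝ)
            - ∑ j ∈ Aab I1 I2 true true p, ∫ t in Ioc (0:ℝ) 1, F1 j t)
            - ∑ j ∈ Aab I1 I2 true true p, ∫ t in Ioc (0:ℝ) 1, F2 j t)
            + ∑ j ∈ Aab I1 I2 true true p,
                (∫ t in Ioc (0:ℝ) 1, F1 j t) * ∫ t in Ioc (0:ℝ) 1, F2 j t := by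
        calc ∑ j ∈ Aab I1 I2 true true p, (∫ ω, P1 j ω ∂μ) * ∫ ω, P2 j ω ∂μ
            = ∑ j ∈ Aab I1 I2 true true p,
                ((((1:ℝ) - ∫ t in Ioc (0:ℝ) 1, F1 j t) - ∫ t in Ioc (0:ℝ) 1, F2 j t)
                  + (∫ t in Ioc (0:ℝ) 1, F1 j t) * ∫ t in Ioc (0:ℝ) 1, F2 j t) :=
              Finset.sum_congr rfl (fun j hj => by
                rw [haltE1 j (mem_Aab hj).1, haltE2 j (mem_Aab hj).2]; ring)
          _ = _ := by
              rw [Finset.sum_add_distrib, Finset.sum_sub_distrib, Finset.sum_sub_distrib,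
                Finset.sum_const, nsmul_eq_mul, mul_one]
      rw [sum_split I1 I2 p, h00, h01, h10, h11]
      ring
    rw [funext hre]
    exact (((((hπ false false).mul_const (1/4)).add
      (Tendsto.const_mul (1/2) ((hπ false true).sub (hS false)))).add
      (Tendsto.const_mul (1/2) ((hπ true false).sub (hT false)))).add
      (((hπ true true).sub (hT true)).sub (hS true))).add hTG
    -- the proportions sum to one
  have hsum1 : ((π false false + π false true) + π true false) + π true true = 1 := by
    have hone : Tendsto (fun p : ℕ => ((((Aab I1 I2 false false p).card : ℝ)/p
        + ((Aab I1 I2 false true p).card : ℝ)/p)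
        + ((Aab I1 I2 true false p).card : ℝ)/p)
        + ((Aab I1 I2 true true p).card : ℝ)/p) atTop
        (nhds (((π false false + π false true) + π true false) + π true true)) :=
      (((hπ false false).add (hπ false true)).add (hπ true false)).add (hπ true true)
    have hone' : Tendsto (fun p : ℕ => ((((Aab I1 I2 false false p).card : ℝ)/p
        + ((Aab I1 I2 false true p).card : ℝ)/p)
        + ((Aab I1 I2 true false p).card : ℝ)/p)
        + ((Aab I1 I2 true true p).card : ℝ)/p) atTop (nhds 1) := by
      refine Tendsto.congr' ?_ (tendsto_const_nhds (x := (1:ℝ)))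
      filter_upwards [eventually_ge_atTop 1] with p hp
      have hps := sum_split I1 I2 p (fun _ => (1:ℝ))
      simp only [Finset.sum_const, nsmul_eq_mul, mul_one, Finset.card_range] at hps
      have hp0 : (p:ℝ) ≠ 0 := Nat.cast_ne_zero.2 (by omega)
      field_simp
      linarith [hps]
    exact tendsto_nhds_unique hone hone'
  -- support facts for the limit measures
  have hae1 : ∀ᵐ x ∂ν1, x ∈ Icc (0:ℝ) 1 := by
    rw [ae_iff]
    have h0 : ν1 (Icc (0:ℝ) 1)ᶜ = 0 := by
      rw [measure_compl measurableSet_Icc (measure_ne_top _ _), measure_univ, hν1supp]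
      simp
    exact h0
  have hae2 : ∀ᵐ x ∂ν2, x ∈ Icc (0:ℝ) 1 := by
    rw [ae_iff]
    have h0 : ν2 (Icc (0:ℝ) 1)ᶜ = 0 := by
      rw [measure_compl measurableSet_Icc (measure_ne_top _ _), measure_univ, hν2supp]
      simp
    exact h0
  have hcomplnull : ν12 ((Icc (0:ℝ) 1 ×ˢ Icc (0:ℝ) 1)ᶜ) = 0 := by
    rw [measure_compl (measurableSet_Icc.prod measurableSet_Icc) (measure_ne_top _ _),
      measure_univ, hν12supp]
    simp
  have hae12 : ∀ᵐ z ∂ν12, z ∈ Icc (0:ℝ) 1 ×ˢ Icc (0:ℝ) 1 := by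
    rw [ae_iff]
    exact hcomplnull
  -- the mean of ν1 and ν2
  have hIntF1lim : IntegrableOn F1lim (Ioc (0:ℝ) 1) volume :=
    (hF1cont.integrableOn_compact isCompact_Icc).mono_set Ioc_subset_Icc_self
  have hIntF2lim : IntegrableOn F2lim (Ioc (0:ℝ) 1) volume :=
    (hF2cont.integrableOn_compact isCompact_Icc).mono_set Ioc_subset_Icc_self
  have hm1 : ∫ x, x ∂ν1 = 1 - ∫ t in Ioc (0:ℝ) 1, F1lim t := by
    rw [CovAux.exp_eq_cdf (X := fun x => x) measurable_id hae1,
      setIntegral_congr_fun measurableSet_Ioc (fun t ht => by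
        show (1 - (ν1 {x : ℝ | x ≤ t}).toReal) = 1 - F1lim t
        rw [show {x : ℝ | x ≤ t} = Iic t from rfl, hν1cdf t (Ioc_subset_Icc_self ht)]),
      integral_sub (integrableOn_const (C := (1:ℝ)) (s := Ioc (0:ℝ) 1) (μ := volume) (by simp [Real.volume_Ioc])) hIntF1lim]
    simp [Real.volume_Ioc]
  have hm2 : ∫ x, x ∂ν2 = 1 - ∫ t in Ioc (0:ℝ) 1, F2lim t := by
    rw [CovAux.exp_eq_cdf (X := fun x => x) measurable_id hae2,
      setIntegral_congr_fun measurableSet_Ioc (fun t ht => by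
        show (1 - (ν2 {x : ℝ | x ≤ t}).toReal) = 1 - F2lim t
        rw [show {x : ℝ | x ≤ t} = Iic t from rfl, hν2cdf t (Ioc_subset_Icc_self ht)]),
      integral_sub (integrableOn_const (C := (1:ℝ)) (s := Ioc (0:ℝ) 1) (μ := volume) (by simp [Real.volume_Ioc])) hIntF2lim]
    simp [Real.volume_Ioc]
  -- edge identities for G1lim
  have hF2one : ∀ j, I2 j = true → F2 j 1 = 1 := by
    intro j hj
    have h := (halt2 j hj).2.1 1 (by norm_num)
    have huniv : {ω | P2 j ω ≤ 1} = univ := by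
      ext ω; simpa using (hrange2 j ω).2
    rw [huniv] at h
    simpa using h.symm
  have hF1one : ∀ j, I1 j = true → F1 j 1 = 1 := by
    intro j hj
    have h := (halt1 j hj).2.1 1 (by norm_num)
    have huniv : {ω | P1 j ω ≤ 1} = univ := by
      ext ω; simpa using (hrange1 j ω).2
    rw [huniv] at h
    simpa using h.symm
  have hone_mem : (1:ℝ) ∈ Icc (0:ℝ) 1 := by norm_num
  have hGF1 : ∀ t1 ∈ Icc (0:ℝ) 1, G1lim t1 1 = F1lim t1 := by
    intro t1 ht1
    have h1 := (hunif1 true).tendsto_at ht1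
    have h2 := hunifG.tendsto_at (x := ((t1, (1:ℝ)) : ℝ × ℝ)) ⟨ht1, hone_mem⟩
    refine tendsto_nhds_unique (h2.congr fun p => ?_) h1
    refine congrArg (fun s => ((Aab I1 I2 true true p).card : ℝ)⁻¹ * s) ?_
    exact Finset.sum_congr rfl fun j hj => by
      rw [hF2one j (mem_Aab hj).2, mul_one]
  have hGF2 : ∀ t2 ∈ Icc (0:ℝ) 1, G1lim 1 t2 = F2lim t2 := by
    intro t2 ht2
    have h1 := (hunif2 true).tendsto_at ht2
    have h2 := hunifG.tendsto_at (x := (((1:ℝ), t2) : ℝ × ℝ)) ⟨hone_mem, ht2⟩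
    refine tendsto_nhds_unique (h2.congr fun p => ?_) h1
    refine congrArg (fun s => ((Aab I1 I2 true true p).card : ℝ)⁻¹ * s) ?_
    exact Finset.sum_congr rfl fun j hj => by
      rw [hF1one j (mem_Aab hj).1, one_mul]
    -- marginals of ν12
  have hmarg : ∀ (C : Set (ℝ × ℝ)) (D : Set (ℝ × ℝ)), D ⊆ C →
      (C \ D) ⊆ (Icc (0:ℝ) 1 ×ˢ Icc (0:ℝ) 1)ᶜ → ν12 C = ν12 D := by
    intro C D hDC hdiff
    refine le_antisymm ?_ (measure_mono hDC)
    calc ν12 C = ν12 (D ∪ (C \ D)) := by rw [union_diff_cancel hDC]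
      _ ≤ ν12 D + ν12 (C \ D) := measure_union_le _ _
      _ = ν12 D := by rw [measure_mono_null hdiff hcomplnull, add_zero]
  have hmargfst : ∀ t1 ∈ Icc (0:ℝ) 1, (ν12 (Iic t1 ×ˢ (univ : Set ℝ))).toReal = F1lim t1 := by
    intro t1 ht1
    have heq : ν12 (Iic t1 ×ˢ (univ : Set ℝ)) = ν12 (Iic t1 ×ˢ Iic (1:ℝ)) := by
      refine hmarg _ _ (prod_mono_right (subset_univ _)) ?_
      rintro ⟨z1, z2⟩ ⟨⟨hz1, -⟩, hz2⟩
      simp only [mem_prod, mem_Iic, not_and] at hz2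
      intro hmem'
      exact hz2 hz1 (hmem'.2.2)
    rw [heq, hν12cdf t1 ht1 1 hone_mem]
    exact hGF1 t1 ht1
  have hmargsnd : ∀ t2 ∈ Icc (0:ℝ) 1, (ν12 ((univ : Set ℝ) ×ˢ Iic t2)).toReal = F2lim t2 := by
    intro t2 ht2
    have heq : ν12 ((univ : Set ℝ) ×ˢ Iic t2) = ν12 (Iic (1:ℝ) ×ˢ Iic t2) := by
      refine hmarg _ _ (prod_mono_left (subset_univ _)) ?_
      rintro ⟨z1, z2⟩ ⟨⟨-, hz2⟩, hz1⟩
      simp only [mem_prod, mem_Iic, not_and] at hz1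
      intro hmem'
      exact hz1 (hmem'.1.2) hz2
    rw [heq, hν12cdf 1 hone_mem t2 ht2]
    exact hGF2 t2 ht2
  -- pointwise inclusion-exclusion for the joint survival function
  have hpoint : ∀ t ∈ Ioc (0:ℝ) 1 ×ˢ Ioc (0:ℝ) 1,
      (fun t : ℝ × ℝ => (ν12 {z : ℝ × ℝ | t.1 < z.1 ∧ t.2 < z.2}).toReal) t
      = (fun t : ℝ × ℝ => 1 - F1lim t.1 - F2lim t.2 + G1lim t.1 t.2) t := by
    intro t ht
    have ht1 : t.1 ∈ Icc (0:ℝ) 1 := Ioc_subset_Icc_self ht.1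
    have ht2 : t.2 ∈ Icc (0:ℝ) 1 := Ioc_subset_Icc_self ht.2
    have hmA : MeasurableSet (Iic t.1 ×ˢ (univ : Set ℝ)) :=
      measurableSet_Iic.prod MeasurableSet.univ
    have hmB : MeasurableSet ((univ : Set ℝ) ×ˢ Iic t.2) :=
      MeasurableSet.univ.prod measurableSet_Iic
    have hcompl : {z : ℝ × ℝ | t.1 < z.1 ∧ t.2 < z.2}
        = ((Iic t.1 ×ˢ (univ : Set ℝ)) ∪ ((univ : Set ℝ) ×ˢ Iic t.2))ᶜ := by
      ext z
      simp [not_or, not_le]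
    have hinter : (Iic t.1 ×ˢ (univ : Set ℝ)) ∩ ((univ : Set ℝ) ×ˢ Iic t.2)
        = Iic t.1 ×ˢ Iic t.2 := by
      ext z
      simp [Prod.le_def, and_comm]
    have hie := measure_union_add_inter (μ := ν12) (Iic t.1 ×ˢ (univ : Set ℝ)) hmB
    have hu : (ν12 ((Iic t.1 ×ˢ (univ : Set ℝ)) ∪ ((univ : Set ℝ) ×ˢ Iic t.2))).toReal
        + (ν12 ((Iic t.1 ×ˢ (univ : Set ℝ)) ∩ ((univ : Set ℝ) ×ˢ Iic t.2))).toReal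
        = (ν12 (Iic t.1 ×ˢ (univ : Set ℝ))).toReal
          + (ν12 ((univ : Set ℝ) ×ˢ Iic t.2)).toReal := by
      rw [← ENNReal.toReal_add (measure_ne_top _ _) (measure_ne_top _ _),
        ← ENNReal.toReal_add (measure_ne_top _ _) (measure_ne_top _ _), hie]
    rw [hinter, hν12cdf t.1 ht1 t.2 ht2, hmargfst t.1 ht1, hmargsnd t.2 ht2] at hu
    show (ν12 {z : ℝ × ℝ | t.1 < z.1 ∧ t.2 < z.2}).toReal = _
    rw [hcompl, measure_compl (hmA.union hmB) (measure_ne_top _ _), measure_univ,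
      ENNReal.toReal_sub_of_le prob_le_one (by simp)]
    simp only [ENNReal.toReal_one]
    linarith [hu]
  -- integral identity for ν12
  have hmeas_eq : (volume : Measure (ℝ × ℝ)).restrict (Ioc (0:ℝ) 1 ×ˢ Ioc (0:ℝ) 1)
      = (volume.restrict (Ioc (0:ℝ) 1)).prod (volume.restrict (Ioc (0:ℝ) 1)) := by
    rw [Measure.prod_restrict, ← Measure.volume_eq_prod]
  have hSvol : (volume : Measure (ℝ × ℝ)) (Ioc (0:ℝ) 1 ×ˢ Ioc (0:ℝ) 1) < ⊤ := by
    rw [Measure.volume_eq_prod, Measure.prod_prod]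
    simp [Real.volume_Ioc]
  have hIntG : IntegrableOn (fun z : ℝ × ℝ => G1lim z.1 z.2)
      (Ioc (0:ℝ) 1 ×ˢ Ioc (0:ℝ) 1) volume :=
    (hG1cont.integrableOn_compact (isCompact_Icc.prod isCompact_Icc)).mono_set
      (prod_mono Ioc_subset_Icc_self Ioc_subset_Icc_self)
  have hIntGf : IntegrableOn (fun z : ℝ × ℝ => F1lim z.1)
      (Ioc (0:ℝ) 1 ×ˢ Ioc (0:ℝ) 1) volume := by
    refine IntegrableOn.mono_set ?_ (prod_mono Ioc_subset_Icc_self Ioc_subset_Icc_self)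
    exact ContinuousOn.integrableOn_compact (isCompact_Icc.prod isCompact_Icc)
      (hF1cont.comp continuous_fst.continuousOn (fun z hz => hz.1))
  have hIntGg : IntegrableOn (fun z : ℝ × ℝ => F2lim z.2)
      (Ioc (0:ℝ) 1 ×ˢ Ioc (0:ℝ) 1) volume := by
    refine IntegrableOn.mono_set ?_ (prod_mono Ioc_subset_Icc_self Ioc_subset_Icc_self)
    exact ContinuousOn.integrableOn_compact (isCompact_Icc.prod isCompact_Icc)
      (hF2cont.comp continuous_snd.continuousOn (fun z hz => hz.2))
  have hfst : ∫ z in Ioc (0:ℝ) 1 ×ˢ Ioc (0:ℝ) 1, F1lim z.1 = ∫ t in Ioc (0:ℝ) 1, F1lim t := by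
    have h1 : (fun z : ℝ × ℝ => F1lim z.1) = fun z : ℝ × ℝ => F1lim z.1 * (1:ℝ) := by
      funext z; rw [mul_one]
    rw [h1]
    rw [show (∫ z in Ioc (0:ℝ) 1 ×ˢ Ioc (0:ℝ) 1, F1lim z.1 * (1:ℝ))
        = ∫ z : ℝ × ℝ, F1lim z.1 * (fun _ : ℝ => (1:ℝ)) z.2
          ∂((volume.restrict (Ioc (0:ℝ) 1)).prod (volume.restrict (Ioc (0:ℝ) 1))) from by
      rw [← hmeas_eq]]
    rw [integral_prod_mul (f := F1lim) (g := fun _ : ℝ => (1:ℝ))]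
    simp [Real.volume_Ioc]
  have hsnd : ∫ z in Ioc (0:ℝ) 1 ×ˢ Ioc (0:ℝ) 1, F2lim z.2 = ∫ t in Ioc (0:ℝ) 1, F2lim t := by
    rw [show (∫ z in Ioc (0:ℝ) 1 ×ˢ Ioc (0:ℝ) 1, F2lim z.2)
        = ∫ z : ℝ × ℝ, (fun _ : ℝ => (1:ℝ)) z.1 * F2lim z.2
          ∂((volume.restrict (Ioc (0:ℝ) 1)).prod (volume.restrict (Ioc (0:ℝ) 1))) from by
      rw [← hmeas_eq]
      simp]
    rw [integral_prod_mul (f := fun _ : ℝ => (1:ℝ)) (g := F2lim)]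
    simp [Real.volume_Ioc]
  have hs12 : ∫ z, z.1 * z.2 ∂ν12
      = 1 - (∫ t in Ioc (0:ℝ) 1, F1lim t) - (∫ t in Ioc (0:ℝ) 1, F2lim t)
        + ∫ z in Ioc (0:ℝ) 1 ×ˢ Ioc (0:ℝ) 1, G1lim z.1 z.2 := by
    have h0 := CovAux.exp2_eq_cdf (μ := ν12) (X := Prod.fst) (Y := Prod.snd)
      measurable_fst measurable_snd (hae12.mono fun z hz => hz.1) (hae12.mono fun z hz => hz.2)
    rw [h0, setIntegral_congr_fun (measurableSet_Ioc.prod measurableSet_Ioc) hpoint]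
    have hInt_b : IntegrableOn (fun z : ℝ × ℝ => 1 - F1lim z.1)
        (Ioc (0:ℝ) 1 ×ˢ Ioc (0:ℝ) 1) volume :=
      (integrableOn_const hSvol.ne).sub hIntGf
    have hInt_a : IntegrableOn (fun z : ℝ × ℝ => 1 - F1lim z.1 - F2lim z.2)
        (Ioc (0:ℝ) 1 ×ˢ Ioc (0:ℝ) 1) volume := hInt_b.sub hIntGg
    rw [integral_add hInt_a hIntG, integral_sub hInt_b hIntGg,
      integral_sub (integrableOn_const (C := (1:ℝ)) (s := Ioc (0:ℝ) 1 ×ˢ Ioc (0:ℝ) 1) (μ := volume) hSvol.ne) hIntGf,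
      hfst, hsnd]
    have hvol1 : ∫ _z in Ioc (0:ℝ) 1 ×ˢ Ioc (0:ℝ) 1, (1:ℝ) = 1 := by
      rw [setIntegral_const]
      rw [Measure.volume_eq_prod, measureReal_def, Measure.prod_prod]
      simp [Real.volume_Ioc]
    rw [hvol1]
    -- almost sure convergence of empirical averages
  have hsl1 := CovAux.slln (μ := μ) hmeas1 hrange1 hpair1
  have hsl2 := CovAux.slln (μ := μ) hmeas2 hrange2 hpair2
  have hsl12 := CovAux.slln (μ := μ) (X := fun j ω => P1 j ω * P2 j ω)
    (fun j => (hmeas1 j).mul (hmeas2 j)) hrange12 hpair12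
  filter_upwards [hsl1, hsl2, hsl12] with ω h1 h2 h12
  have hadd1 := h1.add hdet1
  rw [zero_add] at hadd1
  have hA1 : Tendsto (fun p : ℕ => (p:ℝ)⁻¹ * ∑ j ∈ Finset.range p, P1 j ω) atTop
      (nhds (((π false false * (1/2) + π false true * (1/2)) +
        (π true false - π true false * ∫ t in Ioc (0:ℝ) 1, F1lim t)) +
        (π true true - π true true * ∫ t in Ioc (0:ℝ) 1, F1lim t))) := by
    refine hadd1.congr fun p => ?_
    rw [← mul_add, ← Finset.sum_add_distrib]
    congr 1
    exact Finset.sum_congr rfl fun j _ => by ring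
  have hadd2 := h2.add hdet2
  rw [zero_add] at hadd2
  have hA2 : Tendsto (fun p : ℕ => (p:ℝ)⁻¹ * ∑ j ∈ Finset.range p, P2 j ω) atTop
      (nhds (((π false false * (1/2) +
        (π false true - π false true * ∫ t in Ioc (0:ℝ) 1, F2lim t)) +
        π true false * (1/2)) +
        (π true true - π true true * ∫ t in Ioc (0:ℝ) 1, F2lim t))) := by
    refine hadd2.congr fun p => ?_
    rw [← mul_add, ← Finset.sum_add_distrib]
    congr 1
    exact Finset.sum_congr rfl fun j _ => by ring
  have hadd12 := h12.add hdet12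
  rw [zero_add] at hadd12
  have hA12 : Tendsto (fun p : ℕ => (p:ℝ)⁻¹ * ∑ j ∈ Finset.range p, P1 j ω * P2 j ω) atTop
      (nhds ((((π false false * (1/4) +
        ((1/2) * (π false true - π false true * ∫ t in Ioc (0:ℝ) 1, F2lim t))) +
        ((1/2) * (π true false - π true false * ∫ t in Ioc (0:ℝ) 1, F1lim t))) +
        ((π true true - π true true * ∫ t in Ioc (0:ℝ) 1, F1lim t)
          - π true true * ∫ t in Ioc (0:ℝ) 1, F2lim t))
          + π true true * ∫ z in Ioc (0:ℝ) 1 ×ˢ Ioc (0:ℝ) 1, G1lim z.1 z.2)) := by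
    refine hadd12.congr fun p => ?_
    rw [← mul_add, ← Finset.sum_add_distrib]
    congr 1
    refine Finset.sum_congr rfl fun j _ => ?_
    rw [hprodE j]
    ring
  -- the prefactor p/(p-1) tends to 1
  have hcp : Tendsto (fun p : ℕ => (p:ℝ)/((p:ℝ)-1)) atTop (nhds 1) := by
    have h0 : Tendsto (fun p : ℕ => 1 - 1/(p:ℝ)) atTop (nhds 1) := by
      have := (tendsto_const_nhds (x := (1:ℝ)) (f := (atTop : Filter ℕ))).sub
        tendsto_one_div_atTop_nhds_zero_nat
      simpa using this
    have hbase : Tendsto (fun p : ℕ => ((p:ℝ)-1)/(p:ℝ)) atTop (nhds 1) := by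
      refine h0.congr' ?_
      filter_upwards [eventually_ge_atTop 1] with p hp
      have hp0 : (p:ℝ) ≠ 0 := Nat.cast_ne_zero.2 (by omega)
      field_simp
    have hinv := hbase.inv₀ one_ne_zero
    rw [inv_one] at hinv
    exact hinv.congr fun p => inv_div _ _
  -- put everything together
  have hfinal := (hcp.mul hA12).sub ((hcp.mul hA1).mul (hcp.mul hA2))
  have hev : (fun p : ℕ =>
      ((p:ℝ)/((p:ℝ)-1)) * ((p:ℝ)⁻¹ * ∑ j ∈ Finset.range p, P1 j ω * P2 j ω)
      - ((p:ℝ)/((p:ℝ)-1)) * ((p:ℝ)⁻¹ * ∑ j ∈ Finset.range p, P1 j ω)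
        * (((p:ℝ)/((p:ℝ)-1)) * ((p:ℝ)⁻¹ * ∑ j ∈ Finset.range p, P2 j ω)))
      =ᶠ[atTop] (fun p : ℕ => sigmaHat P1 P2 p ω) := by
    filter_upwards [eventually_ge_atTop 2] with p hp
    have hp0 : (p:ℝ) ≠ 0 := Nat.cast_ne_zero.2 (by omega)
    have hp2 : (2:ℝ) ≤ (p:ℝ) := by exact_mod_cast hp
    have hp1 : (p:ℝ) - 1 ≠ 0 := by
      intro hcon
      rw [sub_eq_zero] at hcon
      linarith
    simp only [sigmaHat]
    have key : ∀ x : ℝ, (p:ℝ)/((p:ℝ)-1) * ((p:ℝ)⁻¹ * x) = ((p:ℝ)-1)⁻¹ * x := by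
      intro x
      field_simp
    rw [key, key, key]
    ring
  have hgoal := hfinal.congr' hev
  have hπ00 : π false false = 1 - π false true - π true false - π true true := by
    linarith [hsum1]
  convert hgoal using 2
  rw [hm1, hm2, hs12, hπ00]
  ring
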